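/- Moment bound for the derivative of the information integrand (Lemma B.1): Under Assumptions 1 and 2 (in particular λ(t;θ) ≥ λ_L > 0 a.s., E((∂²_θ λ(t;θ))²) < ∞, and finite variance of h(t;θ0)), a sufficient condition for E(|∂_{θ0} h_{ij}(t)|^{1+η}) < ∞ for some η > 0 is that E((∂_{θi}λ(t;θ))³) < ∞; indeed it suffices to take any η with 0 < η < 1/4. -/

import Mathlib

/-! With `u = λ'/√λ` and `h = λ'²/λ` one has `∂_θ h = u · (λ'' − h) / √λ`. Since `u⁴ = h²`, the
finite variance of `h` puts `u` in `L⁴`, and `λ'' − h` is in `L²`; Hölder's inequality puts the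
product in `L^{4/3}`, and `1/√λ ≤ 1/√λ_L` is bounded. Hence `∂_θ h ∈ L^{4/3} ⊆ L^{1+η}`. -/

open MeasureTheory ProbabilityTheory Filter Topology

noncomputable section

namespace PPB

lemma mul_div_sub_pow_div_sq_eq {l : ℝ} (hl : 0 < l) (d d₂ : ℝ) :
    d * d₂ / l - d ^ 3 / l ^ 2 = d / √l * (d₂ - d ^ 2 / l) / √l := by
  obtain ⟨s, hs, rfl⟩ : ∃ s, 0 < s ∧ l = s ^ 2 :=
    ⟨√l, Real.sqrt_pos.2 hl, (Real.sq_sqrt hl.le).symm⟩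
  rw [Real.sqrt_sq hs.le]
  field_simp

lemma abs_div_sqrt_le {l m : ℝ} (hm : 0 < m) (hml : m ≤ l) (x : ℝ) :
    |x / √l| ≤ (√m)⁻¹ * |x| := by
  rw [abs_div, abs_of_nonneg (Real.sqrt_nonneg l), div_eq_inv_mul]
  gcongr

instance : ENNReal.HolderTriple 4 2 (4 / 3) := by
  rw [ENNReal.holderTriple_iff, ← ENNReal.toReal_eq_toReal_iff' (by simp) (by simp),
    ENNReal.toReal_add (by simp) (by simp)]
  norm_num

lemma _root_.MeasureTheory.MemLp.integrable_abs_rpow_of_le {α : Type*} [MeasurableSpace α]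
    {μ : Measure α} [IsFiniteMeasure μ] {f : α → ℝ} {p : ENNReal} {s : ℝ} (hf : MemLp f p μ)
    (hs : 0 ≤ s) (hsp : ENNReal.ofReal s ≤ p) : Integrable (fun x => |f x| ^ s) μ := by
  simpa [ENNReal.toReal_ofReal hs] using (hf.mono_exponent hsp).integrable_norm_rpow'

lemma memLp_four_div_sqrt {α : Type*} [MeasurableSpace α] {μ : Measure α} {l d : α → ℝ}
    (hl : Measurable l) (hd : Measurable d) (hl0 : ∀ᵐ x ∂μ, 0 ≤ l x)
    (hh : Integrable (fun x => (d x ^ 2 / l x) ^ 2) μ) :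
    MemLp (fun x => d x / √(l x)) 4 μ := by
  have hmeas : AEStronglyMeasurable (fun x => d x / √(l x)) μ :=
    (hd.div hl.sqrt).aestronglyMeasurable
  rw [← integrable_norm_rpow_iff hmeas (by simp) (by simp)]
  refine hh.congr ?_
  filter_upwards [hl0] with x hx
  rw [show (4 : ENNReal).toReal = 4 by norm_num, Real.rpow_ofNat, Real.norm_eq_abs,
    (by decide : Even 4).pow_abs, div_pow (d x), show √(l x) ^ 4 = (√(l x) ^ 2) ^ 2 by ring,
    Real.sq_sqrt hx]
  ring

theorem information_derivative_moment_bound_general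
    {Ω : Type*} [MeasurableSpace Ω] (P : Measure Ω) (hP : IsProbabilityMeasure P)
    -- λ(t;θ0), ∂_θλ(t;θ0) and ∂²_θλ(t;θ0), at a fixed time t, as random variables
    (lam dlam d2lam : Ω → ℝ)
    (hmeas : Measurable lam ∧ Measurable dlam ∧ Measurable d2lam)
    -- strict positivity of λ, strengthened to a uniform lower bound λ_L > 0
    (lamL : ℝ) (hlamL : 0 < lamL) (hlam : ∀ᵐ ω ∂P, lamL ≤ lam ω)
    -- Assumption 2(a): E((∂_θλ)²) < ∞ and E((∂²_θλ)²) < ∞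
    (hd2 : Integrable (fun ω => (d2lam ω)^2) P)
    -- Assumption 2(b): h = (∂_θλ)²/λ has finite variance
    (hhvar : Integrable (fun ω => ((dlam ω)^2 / lam ω)^2) P) :
    ∀ η : ℝ, 0 < η → η < 1/4 →
      Integrable (fun ω =>
        |dlam ω * d2lam ω / lam ω - (dlam ω)^3 / (lam ω)^2| ^ (1 + η)) P := by
  intro η hη0 hη4
  obtain ⟨hml, hmd, hmd2⟩ := hmeas
  have hu : MemLp (fun ω => dlam ω / √(lam ω)) 4 P :=
    memLp_four_div_sqrt hml hmd (hlam.mono fun ω h => hlamL.le.trans h) hhvar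
  have hv : MemLp (fun ω => d2lam ω - dlam ω ^ 2 / lam ω) 2 P := by
    have hmh := ((hmd.pow_const 2).div hml).aestronglyMeasurable (μ := P)
    exact ((memLp_two_iff_integrable_sq hmd2.aestronglyMeasurable).2 hd2).sub
      ((memLp_two_iff_integrable_sq hmh).2 hhvar)
  have hdh :
      MemLp (fun ω => dlam ω * d2lam ω / lam ω - dlam ω ^ 3 / lam ω ^ 2) (4 / 3) P := by
    have hm := ((hmd.mul hmd2).div hml).sub ((hmd.pow_const 3).div (hml.pow_const 2))
    refine (hv.mul' hu).of_le_mul (c := (√lamL)⁻¹) hm.aestronglyMeasurable ?_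
    filter_upwards [hlam] with ω hω
    rw [Real.norm_eq_abs, Real.norm_eq_abs, mul_div_sub_pow_div_sq_eq (hlamL.trans_le hω)]
    exact abs_div_sqrt_le hlamL hω _
  refine hdh.integrable_abs_rpow_of_le (by linarith) ?_
  rw [ENNReal.ofReal_le_iff_le_toReal (ENNReal.div_ne_top (by simp) (by simp)),
    show (4 / 3 : ENNReal).toReal = 4 / 3 by norm_num]
  linarith

/-- **Lemma B.1.** Moment bound for the derivative of the information integrand (scalar
case): if the intensity is bounded below by `λ_L > 0`, the second derivative `∂²_θλ(t;θ)`
is square integrable, the information integrand `h = (∂_θλ)²/λ` has finite variance, and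
`E(|∂_θλ(t;θ)|³) < ∞`, then `E(|∂_θ h(t;θ0)|^{1+η}) < ∞`; indeed any `0 < η < 1/4` works,
where `∂_θ h = (∂_θλ)(∂²_θλ)/λ − (∂_θλ)³/λ²`. -/
theorem information_derivative_moment_bound
    {Ω : Type*} [MeasurableSpace Ω] (P : Measure Ω) (hP : IsProbabilityMeasure P)
    -- λ(t;θ0), ∂_θλ(t;θ0) and ∂²_θλ(t;θ0), at a fixed time t, as random variables
    (lam dlam d2lam : Ω → ℝ)
    (hmeas : Measurable lam ∧ Measurable dlam ∧ Measurable d2lam)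
    -- strict positivity of λ, strengthened to a uniform lower bound λ_L > 0
    (lamL : ℝ) (hlamL : 0 < lamL) (hlam : ∀ᵐ ω ∂P, lamL ≤ lam ω)
    -- Assumption 2(a): E((∂_θλ)²) < ∞ and E((∂²_θλ)²) < ∞
    (hd1 : Integrable (fun ω => (dlam ω)^2) P)
    (hd2 : Integrable (fun ω => (d2lam ω)^2) P)
    -- Assumption 2(b): h = (∂_θλ)²/λ has finite variance
    (hhvar : Integrable (fun ω => ((dlam ω)^2 / lam ω)^2) P)
    -- the sufficient condition: E(|∂_θλ|³) < ∞
    (hd3 : Integrable (fun ω => |dlam ω|^3) P) :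
    ∀ η : ℝ, 0 < η → η < 1/4 →
      Integrable (fun ω =>
        |dlam ω * d2lam ω / lam ω - (dlam ω)^3 / (lam ω)^2| ^ (1 + η)) P :=
  information_derivative_moment_bound_general P hP lam dlam d2lam hmeas lamL hlamL hlam hd2 hhvar

end PPB
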